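/- Let (L,·) be a loop, A(L) a subgroup of its automorphism group, and H(L) the A(L)-holomorph of (L,·). If H(L) is an Osborn loop, then for every x ∈ L and all φ ∈ A(L): the bijections y ↦ (y/x)·φ⁻¹(x), y ↦ x·(((x\y)/x)·φ⁻¹(x)) and y ↦ y·(x^λ·φ⁻¹(x)) are ρ-regular; moreover there exists a ρ-regular bijection U with y·φ⁻¹(x) = U(y·x) for all y ∈ L, and a ρ-regular bijection V with x·(y·φ⁻¹(x)) = V(x·(y·x)) for all y ∈ L. -/

import Mathlib

/-- A loop: a set with multiplication, left and right division, and a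
two-sided identity element, such that all translations are bijections
(expressed via the division operations). -/
structure Loop (L : Type*) where
  mul : L → L → L
  ldiv : L → L → L
  rdiv : L → L → L
  e : L
  mul_ldiv : ∀ x y, mul x (ldiv x y) = y
  ldiv_mul : ∀ x y, ldiv x (mul x y) = y
  rdiv_mul : ∀ x y, mul (rdiv y x) x = y
  mul_rdiv : ∀ x y, rdiv (mul y x) x = y
  e_mul : ∀ x, mul e x = x
  mul_e : ∀ x, mul x e = x

namespace Loop

variable {L : Type*} (Q : Loop L)

/-- The left inverse `x^λ`, the unique element with `x^λ · x = e`. -/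
def linv (x : L) : L := Q.rdiv Q.e x

/-- The right inverse `x^ρ`, the unique element with `x · x^ρ = e`. -/
def rinv (x : L) : L := Q.ldiv x Q.e

/-- A loop is Osborn if `x·((y·z)·x) = (x·((y·x^λ)·x))·(z·x)` for all `x,y,z`. -/
def IsOsborn : Prop :=
  ∀ x y z, Q.mul x (Q.mul (Q.mul y z) x) =
    Q.mul (Q.mul x (Q.mul (Q.mul y (Q.linv x)) x)) (Q.mul z x)

/-- The automorphism group of a loop, as a subgroup of the permutation group. -/
def autGroup : Subgroup (Equiv.Perm L) where
  carrier := {α | ∀ x y, α (Q.mul x y) = Q.mul (α x) (α y)}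
  one_mem' := fun _ _ => rfl
  mul_mem' := by
    intro α β ha hb x y
    simp only [Equiv.Perm.mul_apply]
    rw [hb x y, ha]
  inv_mem' := by
    intro α ha x y
    apply α.injective
    rw [ha]
    simp

theorem mem_autGroup_iff {α : Equiv.Perm L} :
    α ∈ Q.autGroup ↔ ∀ x y, α (Q.mul x y) = Q.mul (α x) (α y) := Iff.rfl

theorem aut_fix_e {α : Equiv.Perm L} (hα : α ∈ Q.autGroup) : α Q.e = Q.e := by
  have h1 : α (Q.mul Q.e Q.e) = Q.mul (α Q.e) (α Q.e) := hα Q.e Q.e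
  rw [Q.mul_e] at h1
  have h2 : Q.mul (α Q.e) (α Q.e) = Q.mul (α Q.e) Q.e := by rw [Q.mul_e, ← h1]
  have h3 := congrArg (Q.ldiv (α Q.e)) h2
  rwa [Q.ldiv_mul, Q.ldiv_mul] at h3

/-- The `A`-holomorph of a loop `(L,·)`: the loop on `A × L` with multiplication
`(α,x)∘(β,y) = (α∘β, β(x)·y)`, where `A` is a subgroup of the automorphism group. -/
def Holomorph (A : Subgroup (Equiv.Perm L)) (hA : A ≤ Q.autGroup) : Loop (A × L) where
  mul p q := (p.1 * q.1, Q.mul ((q.1 : Equiv.Perm L) p.2) q.2)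
  ldiv p r := (p.1⁻¹ * r.1, Q.ldiv (((p.1⁻¹ * r.1 : A) : Equiv.Perm L) p.2) r.2)
  rdiv r q := (r.1 * q.1⁻¹, ((q.1⁻¹ : A) : Equiv.Perm L) (Q.rdiv r.2 q.2))
  e := (1, Q.e)
  mul_ldiv p r := by
    refine Prod.ext ?_ ?_
    · simp
    · simp [Q.mul_ldiv]
  ldiv_mul p q := by
    refine Prod.ext ?_ ?_
    · simp
    · simp [inv_mul_cancel_left, Q.ldiv_mul]
  rdiv_mul r q := by
    refine Prod.ext ?_ ?_
    · simp
    · simp [Q.rdiv_mul]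
  mul_rdiv p q := by
    refine Prod.ext ?_ ?_
    · simp
    · simp [Q.mul_rdiv]
  e_mul p := by
    refine Prod.ext ?_ ?_
    · simp
    · simp [Q.aut_fix_e (hA p.1.2), Q.e_mul]
  mul_e p := by
    refine Prod.ext ?_ ?_
    · simp
    · simp [Q.mul_e]

/-- A triple `(A,B,C)` of bijections of `L` is an autotopism of `(L,·)` if
`A(x)·B(y) = C(x·y)` for all `x, y`. -/
def IsAutotopism (A B C : L → L) : Prop :=
  Function.Bijective A ∧ Function.Bijective B ∧ Function.Bijective C ∧
    ∀ x y, Q.mul (A x) (B y) = C (Q.mul x y)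

/-- A bijection `U` is ρ-regular if `(I,U,U)` is an autotopism. -/
def IsRhoRegular (U : L → L) : Prop := Q.IsAutotopism id U U

/-- A bijection `U` is λ-regular if `(U,I,U)` is an autotopism. -/
def IsLambdaRegular (U : L → L) : Prop := Q.IsAutotopism U id U

/-- `U'` is an adjoint of the bijection `U` if `(U, U'⁻¹, I)` is an autotopism. -/
def IsMuAdjoint (U U' : L → L) : Prop :=
  letI : Nonempty L := ⟨Q.e⟩
  Function.Bijective U' ∧ Q.IsAutotopism U (Function.invFun U') id

/-- `U` is μ-regular if it has an adjoint, i.e. `(U, U'⁻¹, I)` is an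
autotopism for some bijection `U'`. The μ-regular bijections form `Φ(L,·)`. -/
def IsMuRegular (U : L → L) : Prop := ∃ U', Q.IsMuAdjoint U U'

/-- `U'` belongs to `Ψ(L,·)`, the group of adjoints of μ-regular bijections. -/
def IsPsi (U' : L → L) : Prop := ∃ U, Q.IsMuAdjoint U U'

/-- Membership in the left nucleus `N_λ`. -/
def InNlambda (a : L) : Prop := ∀ y z, Q.mul a (Q.mul y z) = Q.mul (Q.mul a y) z

/-- Membership in the middle nucleus `N_μ`. -/
def InNmu (a : L) : Prop := ∀ y z, Q.mul (Q.mul y a) z = Q.mul y (Q.mul a z)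

/-- Membership in the right nucleus `N_ρ`. -/
def InNrho (a : L) : Prop := ∀ y z, Q.mul (Q.mul y z) a = Q.mul y (Q.mul z a)

/-- Membership in the nucleus `N = N_λ ∩ N_μ ∩ N_ρ`. -/
def InNucleus (a : L) : Prop := Q.InNlambda a ∧ Q.InNmu a ∧ Q.InNrho a

/-- Membership in the center `Z = N ∩ C`. -/
def InCenter (a : L) : Prop := Q.InNucleus a ∧ ∀ x, Q.mul a x = Q.mul x a

end Loop

/-!
Evaluating the Osborn law of the holomorph at `(φ, φ⁻¹x)`, `(1, φ⁻¹y)`, `(1, φ⁻¹z)` and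
reading off the second coordinate gives the twisted law `x·((y·z)·c) = E(y)·(z·c)` with
`c = φ⁻¹(x)` and `E(y) = x·((y·x^λ)·x)`; for `φ = 1` it is the Osborn law of `L`. Writing
`u(b) = (b/x)·c`, the two laws together say `x·u(x\(s·t)) = s·u(t)` for all `s, t` (as `E`
and `R_x` are onto), and `s = e` turns this into `s·u(t) = u(s·t)`. So `u` is ρ-regular, hence
the right translation by `u(e) = x^λ·c`, and the other maps of the theorem are `u` in disguise.
-/

namespace Loop

variable {L : Type*} (Q : Loop L)

theorem mul_left_bijective (x : L) : Function.Bijective (Q.mul x) :=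
  Function.bijective_iff_has_inverse.mpr ⟨Q.ldiv x, Q.ldiv_mul x, Q.mul_ldiv x⟩

theorem mul_right_bijective (c : L) : Function.Bijective fun y => Q.mul y c :=
  Function.bijective_iff_has_inverse.mpr
    ⟨fun y => Q.rdiv y c, fun y => Q.mul_rdiv c y, fun y => Q.rdiv_mul c y⟩

theorem map_linv {α : Equiv.Perm L} (hα : α ∈ Q.autGroup) (x : L) :
    α (Q.linv x) = Q.linv (α x) := by
  have h : Q.mul (α (Q.linv x)) (α x) = Q.e := by
    rw [← hα, Loop.linv, Q.rdiv_mul, Q.aut_fix_e hα]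
  conv_rhs => rw [Loop.linv, ← h, Q.mul_rdiv]

theorem apply_eq_mul_apply_e {u : L → L} (hu : ∀ a b, Q.mul a (u b) = u (Q.mul a b)) (y : L) :
    u y = Q.mul y (u Q.e) := by
  rw [hu, Q.mul_e]

theorem isRhoRegular_of_mul_apply {u : L → L} (hu : ∀ a b, Q.mul a (u b) = u (Q.mul a b)) :
    Q.IsRhoRegular u := by
  have hbij : Function.Bijective u := by
    rw [show u = fun y => Q.mul y (u Q.e) from funext (Q.apply_eq_mul_apply_e hu)]
    exact Q.mul_right_bijective _
  exact ⟨Function.bijective_id, hbij, hbij, hu⟩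

theorem isRhoRegular_rdiv_mul {x c : L} {f : L → L} (hf : Function.Surjective f)
    (hx : ∀ y z, Q.mul x (Q.mul (Q.mul y z) x) = Q.mul (f y) (Q.mul z x))
    (hc : ∀ y z, Q.mul x (Q.mul (Q.mul y z) c) = Q.mul (f y) (Q.mul z c)) :
    Q.IsRhoRegular fun b => Q.mul (Q.rdiv b x) c := by
  have hsplit : ∀ s t, Q.mul x (Q.mul (Q.rdiv (Q.ldiv x (Q.mul s t)) x) c) =
      Q.mul s (Q.mul (Q.rdiv t x) c) := by
    intro s t
    obtain ⟨y, rfl⟩ := hf s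
    conv_lhs => rw [← Q.rdiv_mul x t, ← hx, Q.ldiv_mul, Q.mul_rdiv]
    rw [hc]
  refine Q.isRhoRegular_of_mul_apply fun a b => ?_
  have hsplit_e := hsplit Q.e (Q.mul a b)
  rw [Q.e_mul, Q.e_mul] at hsplit_e
  rw [← hsplit, hsplit_e]

section Holomorph

variable {A : Subgroup (Equiv.Perm L)} {hA : A ≤ Q.autGroup}

theorem holomorph_mul (p q : A × L) :
    (Q.Holomorph A hA).mul p q = (p.1 * q.1, Q.mul ((q.1 : Equiv.Perm L) p.2) q.2) :=
  rfl

theorem holomorph_linv (p : A × L) :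
    (Q.Holomorph A hA).linv p = (p.1⁻¹, ((p.1⁻¹ : A) : Equiv.Perm L) (Q.linv p.2)) :=
  Prod.ext (one_mul _) rfl

theorem holomorph_isOsborn_twisted (h : (Q.Holomorph A hA).IsOsborn) (φ : A) (x y z : L) :
    Q.mul x (Q.mul (Q.mul y z) (((φ⁻¹ : A) : Equiv.Perm L) x)) =
      Q.mul (Q.mul x (Q.mul (Q.mul y (Q.linv x)) x))
        (Q.mul z (((φ⁻¹ : A) : Equiv.Perm L) x)) := by
  have h2 := congrArg Prod.snd
    (h (φ, ((φ⁻¹ : A) : Equiv.Perm L) x) (1, ((φ⁻¹ : A) : Equiv.Perm L) y)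
      (1, ((φ⁻¹ : A) : Equiv.Perm L) z))
  simpa [holomorph_mul, holomorph_linv, Q.mem_autGroup_iff.mp (hA φ.2), Q.map_linv (hA φ.2)]
    using h2

theorem isOsborn_of_holomorph_isOsborn (h : (Q.Holomorph A hA).IsOsborn) : Q.IsOsborn :=
  fun x y z => by simpa using Q.holomorph_isOsborn_twisted h 1 x y z

end Holomorph

end Loop

/-- If `H(L)` is an Osborn loop, then for every `x ∈ L` and all
`φ ∈ A(L)`: the bijections `y ↦ (y/x)·φ⁻¹(x)`, `y ↦ x·(((x\y)/x)·φ⁻¹(x))` and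
`y ↦ y·(x^λ·φ⁻¹(x))` are ρ-regular; moreover there exists a ρ-regular bijection
`U` with `y·φ⁻¹(x) = U(y·x)` for all `y`, and a ρ-regular bijection `V` with
`x·(y·φ⁻¹(x)) = V(x·(y·x))` for all `y`. -/
theorem holomorph_osborn_rho_regular {L : Type*} (Q : Loop L)
    (A : Subgroup (Equiv.Perm L)) (hA : A ≤ Q.autGroup) :
    (Q.Holomorph A hA).IsOsborn →
      ∀ (x : L) (φ : A),
        Q.IsRhoRegular (fun y => Q.mul (Q.rdiv y x) (((φ⁻¹ : A) : Equiv.Perm L) x)) ∧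
        Q.IsRhoRegular (fun y => Q.mul x (Q.mul (Q.rdiv (Q.ldiv x y) x) (((φ⁻¹ : A) : Equiv.Perm L) x))) ∧
        Q.IsRhoRegular (fun y => Q.mul y (Q.mul (Q.linv x) (((φ⁻¹ : A) : Equiv.Perm L) x))) ∧
        (∃ U : L → L, Q.IsRhoRegular U ∧ ∀ y, Q.mul y (((φ⁻¹ : A) : Equiv.Perm L) x) = U (Q.mul y x)) ∧
        (∃ V : L → L, Q.IsRhoRegular V ∧
          ∀ y, Q.mul x (Q.mul y (((φ⁻¹ : A) : Equiv.Perm L) x)) = V (Q.mul x (Q.mul y x))) := by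
  intro hO x φ
  set c := ((φ⁻¹ : A) : Equiv.Perm L) x
  have hE : Function.Surjective fun y => Q.mul x (Q.mul (Q.mul y (Q.linv x)) x) :=
    ((Q.mul_left_bijective x).comp
      ((Q.mul_right_bijective x).comp (Q.mul_right_bijective _))).surjective
  have hu := Q.isRhoRegular_rdiv_mul hE (Q.isOsborn_of_holomorph_isOsborn hO x)
    (Q.holomorph_isOsborn_twisted hO φ x)
  have hmul : ∀ a b, Q.mul a (Q.mul (Q.rdiv b x) c) = Q.mul (Q.rdiv (Q.mul a b) x) c :=
    hu.2.2.2
  refine ⟨hu, ?_, ?_, ⟨_, hu, fun y => by rw [Q.mul_rdiv]⟩,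
    ⟨_, hu, fun y => by simpa only [Q.mul_rdiv] using hmul x (Q.mul y x)⟩⟩
  · convert hu using 2 with y
    rw [hmul, Q.mul_ldiv]
  · convert hu using 2 with y
    exact (Q.apply_eq_mul_apply_e hmul y).symm
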